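/- arXiv:1206.3704 — 4 statements merged into one kernel-verified Lean document; each statement's English description precedes it below -/
import Mathlib

section
/- Let M be a monoidal category. There is an equivalence between: (a) semigroup objects (semi-monoids) in M, i.e. objects A with an associative multiplication μ : A ⊗ A → A; and (b) strict Co-Segal semi-monoids, i.e. lax monoidal functors F : (Δ_epi, +)^op → M such that F(u) is an isomorphism for every morphism u of Δ_epi. -/
/-!
The object `0` is terminal in `Υ`, so for a strict `P` the isomorphisms
`P.map (toZero n) : P.obj 0 ≅ P.obj n` identify every `P.obj n` with `P.obj 0`, compatibly with
all structure maps. Naturality of the laxity maps along `toZero a + toZero b` shows that under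
these identifications every laxity map becomes the single multiplication
`P.lax 0 0 ≫ (P.map (toZero 1))⁻¹`, whose associativity is then the case `a = b = c = 0` of
`lax_assoc`; the same identifications form an isomorphism from `P` to the constant functor on
this semigroup. Conversely a semigroup gives the constant functor, and a morphism between
constant functors is constant (naturality along `toZero n`), so this construction is fully
faithful.
-/

universe v u

open CategoryTheory Limits MonoidalCategory

/-- A morphism `a ⟶ b` of the semi-monoidal category `Υ = (Δ_epi, +)` of finite nonempty
ordinals and surjective monotone maps; the object `n : ℕ` stands for the ordinal with
`n + 1` elements `{0, …, n}`, and a morphism is (a normalized presentation of) a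
surjective monotone map `{0, …, a} ↠ {0, …, b}`. -/
structure EHom (a b : ℕ) : Type where
  f : ℕ → ℕ
  mono : Monotone f
  bound : ∀ k, a ≤ k → f k = b
  surj : ∀ j, j ≤ b → ∃ i, i ≤ a ∧ f i = j

namespace EHom

/-- The identity morphism of `Υ`. -/
def id (a : ℕ) : EHom a a where
  f := fun k => min k a
  mono := by intro x y h; dsimp only; omega
  bound := by intro k hk; (try dsimp only); omega
  surj := fun j hj => ⟨j, hj, by (try dsimp only); omega⟩

/-- Composition in `Υ`. -/
def comp {a b c : ℕ} (u : EHom a b) (w : EHom b c) : EHom a c where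
  f := fun k => w.f (u.f k)
  mono := fun _ _ h => w.mono (u.mono h)
  bound := fun k hk => by (try dsimp only); rw [u.bound k hk, w.bound b le_rfl]
  surj := fun j hj => by
    obtain ⟨i, hi, hfi⟩ := w.surj j hj
    obtain ⟨i', hi', hfi'⟩ := u.surj i hi
    exact ⟨i', hi', by (try dsimp only); rw [hfi', hfi]⟩

/-- The tensor product (ordinal addition) of morphisms in `Υ = (Δ_epi, +)`:
`u + w : (a + b + 1) ⟶ (a' + b' + 1)` for `u : a ⟶ a'` and `w : b ⟶ b'`. -/
def add {a a' b b' : ℕ} (u : EHom a a') (w : EHom b b') :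
    EHom (a + b + 1) (a' + b' + 1) where
  f := fun k => if k < a + 1 then u.f k else a' + 1 + w.f (k - (a + 1))
  mono := by
    intro x y hxy
    dsimp only
    split_ifs with h1 h2
    · exact u.mono hxy
    · have h3 : u.f x ≤ u.f a := u.mono (by omega)
      have h4 : u.f a = a' := u.bound a le_rfl
      omega
    · omega
    · have := w.mono (show x - (a + 1) ≤ y - (a + 1) by omega)
      omega
  bound := by
    intro k hk
    try dsimp only
    rw [if_neg (by omega), w.bound (k - (a + 1)) (by omega)]
    omega
  surj := by
    intro j hj
    rcases lt_or_ge j (a' + 1) with h | h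
    · obtain ⟨i, hi, hfi⟩ := u.surj j (by omega)
      refine ⟨i, by omega, ?_⟩
      try dsimp only
      rw [if_pos (by omega)]
      exact hfi
    · obtain ⟨i, hi, hfi⟩ := w.surj (j - (a' + 1)) (by omega)
      refine ⟨a + 1 + i, by omega, ?_⟩
      try dsimp only
      rw [if_neg (by omega), show a + 1 + i - (a + 1) = i by omega, hfi]
      omega

end EHom

variable (M : Type u) [Category.{v} M] [MonoidalCategory M]

/-- A semigroup object (semi-monoid) in a monoidal category: an object with an
associative multiplication. -/
structure SemigrpObj where
  X : M
  mul : X ⊗ X ⟶ X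
  mul_assoc : (mul ▷ X) ≫ mul = (α_ X X X).hom ≫ (X ◁ mul) ≫ mul

instance SemigrpObj.category : Category (SemigrpObj M) where
  Hom A B := {f : A.X ⟶ B.X // A.mul ≫ f = (f ⊗ₘ f) ≫ B.mul}
  id A := ⟨𝟙 A.X, by simp⟩
  comp f g := ⟨f.1 ≫ g.1, by
    rw [← Category.assoc, f.2, Category.assoc, g.2, ← Category.assoc,
      MonoidalCategory.tensorHom_comp_tensorHom]⟩
  id_comp f := Subtype.ext (Category.id_comp f.1)
  comp_id f := Subtype.ext (Category.comp_id f.1)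
  assoc f g h := Subtype.ext (Category.assoc f.1 g.1 h.1)

/-- A pre-Co-Segal semi-monoid in a monoidal category `M`: a lax monoidal functor
`F : Υᵒᵖ = (Δ_epi, +)ᵒᵖ → M`, given by objects `F n`, contravariant functorial structure
maps `F (u) : F b ⟶ F a` for `u : a ⟶ b` in `Υ`, and laxity maps
`F a ⊗ F b ⟶ F (a + b + 1)` which are natural and associative-coherent.  It is a
(strict) *Co-Segal semi-monoid* when all structure maps `F (u)` are (iso)weak
equivalences. -/
structure CoSegalSemiMonoid where
  obj : ℕ → M
  map : ∀ {a b : ℕ}, EHom a b → (obj b ⟶ obj a)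
  map_id : ∀ a, map (EHom.id a) = 𝟙 (obj a)
  map_comp : ∀ {a b c : ℕ} (u : EHom a b) (w : EHom b c),
    map (u.comp w) = map w ≫ map u
  lax : ∀ a b : ℕ, obj a ⊗ obj b ⟶ obj (a + b + 1)
  lax_natural : ∀ {a a' b b' : ℕ} (u : EHom a a') (w : EHom b b'),
    (map u ⊗ₘ map w) ≫ lax a b = lax a' b' ≫ map (u.add w)
  lax_assoc : ∀ a b c : ℕ,
    (lax a b ▷ obj c) ≫ lax (a + b + 1) c =
      (α_ (obj a) (obj b) (obj c)).hom ≫ (obj a ◁ lax b c) ≫ lax a (b + c + 1) ≫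
        eqToHom (by rw [show a + (b + c + 1) + 1 = a + b + 1 + c + 1 by omega])

variable {M}

/-- A morphism of (pre-)Co-Segal semi-monoids: a monoidal natural transformation. -/
structure CoSegalHom (P Q : CoSegalSemiMonoid M) where
  app : ∀ n : ℕ, P.obj n ⟶ Q.obj n
  naturality : ∀ {a b : ℕ} (u : EHom a b), P.map u ≫ app a = app b ≫ Q.map u
  monoidal : ∀ a b : ℕ,
    (app a ⊗ₘ app b) ≫ Q.lax a b = P.lax a b ≫ app (a + b + 1)

theorem CoSegalHom.ext' {P Q : CoSegalSemiMonoid M} {f g : CoSegalHom P Q}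
    (h : ∀ n, f.app n = g.app n) : f = g := by
  obtain ⟨fapp, fnat, fmon⟩ := f
  obtain ⟨gapp, gnat, gmon⟩ := g
  have he : fapp = gapp := funext h
  subst he
  rfl

instance CoSegalSemiMonoid.category : Category (CoSegalSemiMonoid M) where
  Hom := CoSegalHom
  id P := ⟨fun n => 𝟙 (P.obj n), fun u => by simp, fun a b => by
    simp [MonoidalCategory.id_tensorHom_id]⟩
  comp f g := ⟨fun n => f.app n ≫ g.app n, fun u => by
      rw [← Category.assoc, f.naturality u, Category.assoc, g.naturality u,
        ← Category.assoc],
    fun a b => by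
      rw [← MonoidalCategory.tensorHom_comp_tensorHom, Category.assoc, g.monoidal a b,
        ← Category.assoc, f.monoidal a b, Category.assoc]⟩
  id_comp f := CoSegalHom.ext' fun n => Category.id_comp (f.app n)
  comp_id f := CoSegalHom.ext' fun n => Category.comp_id (f.app n)
  assoc f g h := CoSegalHom.ext' fun n => Category.assoc _ _ _

namespace EHom

theorem ext {a b : ℕ} {u w : EHom a b} (h : u.f = w.f) : u = w := by
  cases u; cases w; cases h; rfl

def toZero (a : ℕ) : EHom a 0 where
  f := fun _ => 0
  mono := monotone_const
  bound := fun _ _ => rfl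
  surj := fun _ hj => ⟨0, Nat.zero_le _, (Nat.le_zero.mp hj).symm⟩

theorem f_eq_zero {a : ℕ} (u : EHom a 0) (k : ℕ) : u.f k = 0 :=
  Nat.le_zero.mp ((u.mono (le_max_left k a)).trans_eq (u.bound _ (le_max_right k a)))

instance (a : ℕ) : Subsingleton (EHom a 0) where
  allEq u w := ext <| funext fun k => (f_eq_zero u k).trans (f_eq_zero w k).symm

end EHom

namespace SemigrpObj

def toCoSegal (A : SemigrpObj M) : CoSegalSemiMonoid M where
  obj _ := A.X
  map _ := 𝟙 A.X
  map_id _ := rfl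
  map_comp _ _ := (Category.comp_id _).symm
  lax _ _ := A.mul
  lax_natural _ _ := by simp
  lax_assoc _ _ _ := by simpa using A.mul_assoc

variable (M) in
def toCoSegalFunctor : SemigrpObj M ⥤ CoSegalSemiMonoid M where
  obj := toCoSegal
  map f := ⟨fun _ => f.1, fun _ => by simp [toCoSegal], fun _ _ => f.2.symm⟩

theorem app_eq_app_zero {A B : SemigrpObj M} (h : A.toCoSegal ⟶ B.toCoSegal) (n : ℕ) :
    h.app n = h.app 0 := by
  simpa [toCoSegal] using h.naturality (EHom.toZero n)

def fullyFaithfulToCoSegalFunctor : (toCoSegalFunctor M).FullyFaithful where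
  preimage h := ⟨h.app 0, by
    have monoidal := h.monoidal 0 0
    rw [app_eq_app_zero h 1] at monoidal
    exact monoidal.symm⟩
  map_preimage h := CoSegalHom.ext' fun n => (app_eq_app_zero h n).symm

instance : (toCoSegalFunctor M).Full := fullyFaithfulToCoSegalFunctor.full

instance : (toCoSegalFunctor M).Faithful := fullyFaithfulToCoSegalFunctor.faithful

end SemigrpObj

namespace CoSegalHom

variable {P Q : CoSegalSemiMonoid M}

theorem isIso_of_isIso_app (f : P ⟶ Q) (hf : ∀ n, IsIso (f.app n)) : IsIso f :=
  ⟨⟨⟨fun n => inv (f.app n), fun u => by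
      rw [IsIso.comp_inv_eq, Category.assoc, f.naturality, IsIso.inv_hom_id_assoc],
    fun a b => by
      rw [IsIso.eq_comp_inv, Category.assoc, ← f.monoidal, ← Category.assoc,
        tensorHom_comp_tensorHom, IsIso.inv_hom_id, IsIso.inv_hom_id, id_tensorHom_id,
        Category.id_comp]⟩,
    CoSegalHom.ext' fun n => IsIso.hom_inv_id (f.app n),
    CoSegalHom.ext' fun n => IsIso.inv_hom_id (f.app n)⟩⟩

end CoSegalHom

namespace CoSegalSemiMonoid

variable (P : CoSegalSemiMonoid M)

theorem map_toZero_comp_map {a b : ℕ} (u : EHom a b) :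
    P.map (EHom.toZero b) ≫ P.map u = P.map (EHom.toZero a) := by
  rw [← P.map_comp, Subsingleton.elim (u.comp (EHom.toZero b)) (EHom.toZero a)]

theorem map_toZero_zero : P.map (EHom.toZero 0) = 𝟙 (P.obj 0) := by
  rw [Subsingleton.elim (EHom.toZero 0) (EHom.id 0), P.map_id]

section Strict

variable [∀ n, IsIso (P.map (EHom.toZero n))]

noncomputable def mul : P.obj 0 ⊗ P.obj 0 ⟶ P.obj 0 :=
  P.lax 0 0 ≫ inv (P.map (EHom.toZero 1))

theorem tensorHom_map_toZero_comp_lax (a b : ℕ) :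
    (P.map (EHom.toZero a) ⊗ₘ P.map (EHom.toZero b)) ≫ P.lax a b =
      P.mul ≫ P.map (EHom.toZero (a + b + 1)) := by
  rw [P.lax_natural, mul, Category.assoc, ← P.map_toZero_comp_map
    ((EHom.toZero a).add (EHom.toZero b)), IsIso.inv_hom_id_assoc]

theorem mul_assoc :
    (P.mul ▷ P.obj 0) ≫ P.mul = (α_ _ _ _).hom ≫ (P.obj 0 ◁ P.mul) ≫ P.mul := by
  have left :
      (P.map (EHom.toZero 1) ▷ P.obj 0) ≫ P.lax 1 0 = P.mul ≫ P.map (EHom.toZero 2) := by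
    simpa [map_toZero_zero] using P.tensorHom_map_toZero_comp_lax 1 0
  have right :
      (P.obj 0 ◁ P.map (EHom.toZero 1)) ≫ P.lax 0 1 = P.mul ≫ P.map (EHom.toZero 2) := by
    simpa [map_toZero_zero] using P.tensorHom_map_toZero_comp_lax 0 1
  rw [← cancel_mono (P.map (EHom.toZero 2))]
  calc ((P.mul ▷ P.obj 0) ≫ P.mul) ≫ P.map (EHom.toZero 2)
      = (P.mul ▷ P.obj 0) ≫ (P.map (EHom.toZero 1) ▷ P.obj 0) ≫ P.lax 1 0 := by
        rw [left, Category.assoc]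
    _ = (P.lax 0 0 ▷ P.obj 0) ≫ P.lax 1 0 := by
        rw [← comp_whiskerRight_assoc, mul, Category.assoc, IsIso.inv_hom_id, Category.comp_id]
    _ = (α_ _ _ _).hom ≫ (P.obj 0 ◁ P.lax 0 0) ≫ P.lax 0 1 := by
        simpa using P.lax_assoc 0 0 0
    _ = (α_ _ _ _).hom ≫ (P.obj 0 ◁ P.mul) ≫ (P.obj 0 ◁ P.map (EHom.toZero 1)) ≫
          P.lax 0 1 := by
        rw [← whiskerLeft_comp_assoc, mul, Category.assoc, IsIso.inv_hom_id, Category.comp_id]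
    _ = ((α_ _ _ _).hom ≫ (P.obj 0 ◁ P.mul) ≫ P.mul) ≫ P.map (EHom.toZero 2) := by
        rw [right]; simp only [Category.assoc]

noncomputable def toSemigrpObj : SemigrpObj M where
  X := P.obj 0
  mul := P.mul
  mul_assoc := P.mul_assoc

noncomputable def toSemigrpObjToCoSegalHom : P.toSemigrpObj.toCoSegal ⟶ P where
  app n := P.map (EHom.toZero n)
  naturality u := (Category.id_comp _).trans (P.map_toZero_comp_map u).symm
  monoidal := P.tensorHom_map_toZero_comp_lax

noncomputable def toSemigrpObjToCoSegalIso : P.toSemigrpObj.toCoSegal ≅ P :=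
  haveI := CoSegalHom.isIso_of_isIso_app P.toSemigrpObjToCoSegalHom fun n =>
    inferInstanceAs (IsIso (P.map (EHom.toZero n)))
  asIso P.toSemigrpObjToCoSegalHom

end Strict

end CoSegalSemiMonoid

variable (M) in
abbrev SemigrpObj.toStrictCoSegal : SemigrpObj M ⥤ ObjectProperty.FullSubcategory
    (fun P : CoSegalSemiMonoid M => ∀ {a b : ℕ} (u : EHom a b), IsIso (P.map u)) :=
  ObjectProperty.lift _ (SemigrpObj.toCoSegalFunctor M) fun A _ _ _ =>
    inferInstanceAs (IsIso (𝟙 A.X))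

instance : (SemigrpObj.toStrictCoSegal M).IsEquivalence where
  essSurj := ⟨fun P => by
    have := fun n => P.property (EHom.toZero n)
    exact ⟨P.obj.toSemigrpObj, ⟨ObjectProperty.isoMk _ P.obj.toSemigrpObjToCoSegalIso⟩⟩⟩

/-- **Semigroup objects are the same as strict Co-Segal semi-monoids.**  For a monoidal
category `M`, there is an equivalence between the category of semigroup objects
(semi-monoids) of `M` and the category of strict Co-Segal semi-monoids of `M`, i.e. lax
monoidal functors `F : (Δ_epi, +)ᵒᵖ → M` all of whose structure maps `F (u)` are
isomorphisms. -/
theorem semigroupObj_equiv_strict_coSegal_semiMonoid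
    (M : Type u) [Category.{v} M] [MonoidalCategory M] :
    Nonempty (SemigrpObj M ≌
      ObjectProperty.FullSubcategory (fun P : CoSegalSemiMonoid M =>
        ∀ {a b : ℕ} (u : EHom a b), IsIso (P.map u))) :=
  ⟨(SemigrpObj.toStrictCoSegal M).asEquivalence⟩
end

section
/- Let F, G be S-diagrams in a cocomplete symmetric monoidal closed category M with the same object set X, let σ₁, σ₂ : F ⇉ G be parallel morphisms of S-diagrams, and let L : U(G) → E be their coequalizer computed in K_X (levelwise). Suppose there exists a splitting p : U(G) → U(F) in K_X with σ₁ ∘ p = σ₂ ∘ p = id_{U(G)}. Then E carries a unique structure of S-diagram making L a morphism of S-diagrams, and L : G → E is the coequalizer of (σ₁, σ₂) in M_S(X); moreover U preserves this coequalizer. -/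
universe w v u

open CategoryTheory Limits MonoidalCategory

/-- A chain from `A` to `B` in the indiscrete category `X̄` on the set `X`: a finite
sequence of vertices `A = v 0, v 1, …, v n = B` of positive length `n` (normalized so
that `v k = B` for all `k ≥ n`).  These are the 1-morphisms of the semi-2-category
`S_X̄`. -/
@[ext]
structure Chain (X : Type w) (A B : X) : Type w where
  n : ℕ
  pos : 0 < n
  v : ℕ → X
  v0 : v 0 = A
  vend : ∀ k, n ≤ k → v k = B

namespace Chain

variable {X : Type w}

/-- Composition (concatenation) of chains; this is the horizontal composition of
1-morphisms in `S_X̄`. -/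
def comp {A B C : X} (s : Chain X A B) (t : Chain X B C) : Chain X A C where
  n := s.n + t.n
  pos := by have := s.pos; omega
  v := fun k => if k < s.n then s.v k else t.v (k - s.n)
  v0 := by (try dsimp only); rw [if_pos s.pos]; exact s.v0
  vend := fun k hk => by
    (try dsimp only)
    rw [if_neg (by have := t.pos; omega)]
    exact t.vend _ (by omega)

@[simp] theorem comp_n {A B C : X} (s : Chain X A B) (t : Chain X B C) :
    (s.comp t).n = s.n + t.n := rfl

theorem comp_v {A B C : X} (s : Chain X A B) (t : Chain X B C) (k : ℕ) :
    (s.comp t).v k = if k < s.n then s.v k else t.v (k - s.n) := rfl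

theorem comp_assoc {A B C D : X} (s : Chain X A B) (t : Chain X B C) (u : Chain X C D) :
    (s.comp t).comp u = s.comp (t.comp u) := by
  ext
  · simp only [comp_n]; omega
  · simp only [comp_v, comp_n]
    rename_i k
    by_cases h1 : k < s.n <;> by_cases h2 : k < s.n + t.n <;> by_cases h3 : k - s.n < t.n <;>
      simp only [h1, h2, h3, ↓reduceIte] <;> first | rfl | (congr 1 <;> omega) | (exfalso; omega)

end Chain

/-- A 2-morphism `t ⟶ s` of `S_X̄(A,B)`: a monotone surjection of index sets (normalized
beyond `t.n`) compatible with the vertices, i.e. `t.v i = s.v (f i)`; it deletes letters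
of the chain `t` to produce `s`. -/
structure ChainHom {X : Type w} {A B : X} (t s : Chain X A B) : Type where
  f : ℕ → ℕ
  mono : Monotone f
  bound : ∀ k, t.n ≤ k → f k = s.n
  surj : ∀ j, j ≤ s.n → ∃ i, i ≤ t.n ∧ f i = j
  compat : ∀ i, t.v i = s.v (f i)

namespace ChainHom

variable {X : Type w}

/-- The identity 2-morphism on a chain. -/
def id {A B : X} (t : Chain X A B) : ChainHom t t where
  f := fun k => min k t.n
  mono := by intro a b h; (try dsimp only); omega
  bound := by intro k hk; (try dsimp only); omega
  surj := fun j hj => ⟨j, hj, by (try dsimp only); omega⟩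
  compat := fun i => by
    (try dsimp only)
    rcases le_or_gt t.n i with h | h
    · rw [t.vend i h, show min i t.n = t.n by omega, t.vend t.n le_rfl]
    · rw [show min i t.n = i by omega]

/-- Vertical composition of 2-morphisms of `S_X̄(A,B)`. -/
def comp {A B : X} {t s r : Chain X A B} (u : ChainHom t s) (w : ChainHom s r) :
    ChainHom t r where
  f := fun k => w.f (u.f k)
  mono := fun _ _ h => w.mono (u.mono h)
  bound := fun k hk => by (try dsimp only); rw [u.bound k hk, w.bound s.n le_rfl]
  surj := fun j hj => by
    obtain ⟨i, hi, hfi⟩ := w.surj j hj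
    obtain ⟨i', hi', hfi'⟩ := u.surj i hi
    exact ⟨i', hi', by (try dsimp only); rw [hfi', hfi]⟩
  compat := fun i => by (try dsimp only); rw [u.compat i, w.compat (u.f i)]

/-- Horizontal composition of 2-morphisms, over the composition of chains. -/
def hcomp {A B C : X} {t t' : Chain X A B} {s s' : Chain X B C}
    (u : ChainHom t t') (w : ChainHom s s') : ChainHom (t.comp s) (t'.comp s') where
  f := fun k => if k < t.n then u.f k else t'.n + w.f (k - t.n)
  mono := by
    intro a b hab
    (try dsimp only)
    split_ifs with h1 h2
    · exact u.mono hab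
    · have h3 : u.f a ≤ u.f t.n := u.mono (by omega)
      have h4 : u.f t.n = t'.n := u.bound t.n le_rfl
      omega
    · omega
    · have := w.mono (show a - t.n ≤ b - t.n by omega)
      omega
  bound := by
    intro k hk
    have hk' : t.n + s.n ≤ k := hk
    (try dsimp only)
    rw [if_neg (by omega), w.bound (k - t.n) (by omega)]
    rfl
  surj := by
    intro j hj
    have hj' : j ≤ t'.n + s'.n := hj
    rcases lt_or_ge j t'.n with h | h
    · obtain ⟨i, hi, hfi⟩ := u.surj j (by omega)
      have hilt : i < t.n := by
        by_contra hcon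
        have h5 : u.f i = t'.n := u.bound i (by omega)
        omega
      refine ⟨i, ?_, ?_⟩
      · have h6 : (t.comp s).n = t.n + s.n := rfl
        omega
      · (try dsimp only); rw [if_pos hilt]; exact hfi
    · obtain ⟨i, hi, hfi⟩ := w.surj (j - t'.n) (by omega)
      refine ⟨t.n + i, ?_, ?_⟩
      · have h6 : (t.comp s).n = t.n + s.n := rfl
        omega
      · (try dsimp only)
        rw [if_neg (by omega), show t.n + i - t.n = i by omega, hfi]
        omega
  compat := by
    intro i
    (try dsimp only)
    by_cases h1 : i < t.n
    · rw [if_pos h1]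
      have hL : (t.comp s).v i = t.v i := by rw [Chain.comp_v, if_pos h1]
      have h2 : u.f i ≤ t'.n := by
        have h3 := u.mono (show i ≤ t.n by omega)
        have h4 := u.bound t.n le_rfl
        omega
      rcases lt_or_eq_of_le h2 with h3 | h3
      · have hR : (t'.comp s').v (u.f i) = t'.v (u.f i) := by
          rw [Chain.comp_v, if_pos h3]
        rw [hL, hR]; exact u.compat i
      · have hR : (t'.comp s').v (u.f i) = s'.v (u.f i - t'.n) := by
          rw [Chain.comp_v, if_neg (by omega)]
        rw [hL, hR, u.compat i, h3, t'.vend t'.n le_rfl,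
          show t'.n - t'.n = 0 by omega, s'.v0]
    · rw [if_neg h1]
      have hL : (t.comp s).v i = s.v (i - t.n) := by rw [Chain.comp_v, if_neg h1]
      have hR : (t'.comp s').v (t'.n + w.f (i - t.n)) = s'.v (w.f (i - t.n)) := by
        rw [Chain.comp_v, if_neg (by omega)]
        congr 1
        omega
      rw [hL, hR]
      exact w.compat (i - t.n)

end ChainHom

variable (M : Type u) [Category.{v} M]

/-- An object of `K_X = ∏_{(A,B) ∈ X²} Fun(S_X̄(A,B)ᵒᵖ, M)`: a family of contravariant
functors on the categories of chains.  (This is the underlying data of a pre-Co-Segal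
category, without laxity maps.) -/
structure KObj (X : Type w) where
  F : ∀ {A B : X}, Chain X A B → M
  map : ∀ {A B : X} {t s : Chain X A B}, ChainHom t s → (F s ⟶ F t)
  map_id : ∀ {A B : X} (t : Chain X A B), map (ChainHom.id t) = 𝟙 (F t)
  map_comp : ∀ {A B : X} {t s r : Chain X A B} (u : ChainHom t s) (w : ChainHom s r),
    map (u.comp w) = map w ≫ map u

variable {M}

/-- A morphism of `K_X`: a levelwise natural transformation. -/
structure KHom {X : Type w} (P Q : KObj M X) where
  app : ∀ {A B : X} (t : Chain X A B), P.F t ⟶ Q.F t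
  naturality : ∀ {A B : X} {t s : Chain X A B} (u : ChainHom t s),
    P.map u ≫ app t = app s ≫ Q.map u

theorem KHom.ext' {X : Type w} {P Q : KObj M X} {f g : KHom P Q}
    (h : ∀ {A B : X} (t : Chain X A B), f.app t = g.app t) : f = g := by
  obtain ⟨fapp, fnat⟩ := f
  obtain ⟨gapp, gnat⟩ := g
  have he : @fapp = @gapp := by
    funext A B t
    exact h t
  subst he
  rfl

instance KObj.category {X : Type w} : Category (KObj M X) where
  Hom := KHom
  id P := ⟨fun t => 𝟙 (P.F t), fun u => by simp⟩
  comp f g := ⟨fun t => f.app t ≫ g.app t, fun u => by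
    rw [← Category.assoc, f.naturality u, Category.assoc, g.naturality u,
      ← Category.assoc]⟩
  id_comp f := KHom.ext' fun t => Category.id_comp (f.app t)
  comp_id f := KHom.ext' fun t => Category.comp_id (f.app t)
  assoc f g h := KHom.ext' fun t => Category.assoc _ _ _

variable (M) [MonoidalCategory M]

/-- A pre-Co-Segal category with object set `X` (an object of `M_S(X)`): a lax diagram
`(S_X̄)^{2-op} ⥤ M`, i.e. a family of functors on chains together with laxity maps
`F s ⊗ F t ⟶ F (s ⊗ t)` which are natural and associative-coherent. -/
structure SObj (X : Type w) extends KObj M X where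
  lax : ∀ {A B C : X} (s : Chain X A B) (t : Chain X B C), F s ⊗ F t ⟶ F (s.comp t)
  lax_natural : ∀ {A B C : X} {s s' : Chain X A B} {t t' : Chain X B C}
    (u : ChainHom s s') (w : ChainHom t t'),
    (map u ⊗ₘ map w) ≫ lax s t = lax s' t' ≫ map (u.hcomp w)
  lax_assoc : ∀ {A B C D : X} (s : Chain X A B) (t : Chain X B C) (r : Chain X C D),
    (lax s t ▷ F r) ≫ lax (s.comp t) r =
      (α_ (F s) (F t) (F r)).hom ≫ (F s ◁ lax t r) ≫ lax s (t.comp r) ≫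
        eqToHom (by rw [Chain.comp_assoc])

variable {M}

/-- A morphism of pre-Co-Segal categories over a fixed object set: a levelwise natural
transformation compatible with the laxity maps (an icon). -/
structure SHom {X : Type w} (P Q : SObj M X) where
  app : ∀ {A B : X} (t : Chain X A B), P.F t ⟶ Q.F t
  naturality : ∀ {A B : X} {t s : Chain X A B} (u : ChainHom t s),
    P.map u ≫ app t = app s ≫ Q.map u
  monoidal : ∀ {A B C : X} (s : Chain X A B) (t : Chain X B C),
    (app s ⊗ₘ app t) ≫ Q.lax s t = P.lax s t ≫ app (s.comp t)

theorem SHom.ext' {X : Type w} {P Q : SObj M X} {f g : SHom P Q}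
    (h : ∀ {A B : X} (t : Chain X A B), f.app t = g.app t) : f = g := by
  obtain ⟨fapp, fnat, fmon⟩ := f
  obtain ⟨gapp, gnat, gmon⟩ := g
  have he : @fapp = @gapp := by
    funext A B t
    exact h t
  subst he
  rfl

instance SObj.category {X : Type w} : Category (SObj M X) where
  Hom := SHom
  id P := ⟨fun t => 𝟙 (P.F t), fun u => by simp, fun s t => by
    simp [MonoidalCategory.id_tensorHom_id]⟩
  comp f g := ⟨fun t => f.app t ≫ g.app t, fun u => by
      rw [← Category.assoc, f.naturality u, Category.assoc, g.naturality u,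
        ← Category.assoc],
    fun s t => by
      rw [← MonoidalCategory.tensorHom_comp_tensorHom, Category.assoc, g.monoidal s t,
        ← Category.assoc, f.monoidal s t, Category.assoc]⟩
  id_comp f := SHom.ext' fun t => Category.id_comp (f.app t)
  comp_id f := SHom.ext' fun t => Category.comp_id (f.app t)
  assoc f g h := SHom.ext' fun t => Category.assoc _ _ _

variable (M)

/-- The forgetful functor `U : M_S(X) ⥤ K_X` which forgets the laxity maps of a
pre-Co-Segal category. -/
def forgetLax (X : Type w) : SObj M X ⥤ KObj M X where
  obj P := P.toKObj
  map f := ⟨f.app, f.naturality⟩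
  map_id _ := KHom.ext' fun _ => rfl
  map_comp _ _ := KHom.ext' fun _ => rfl

variable {M}

variable (M) in
/-- The structure of laxity maps on an object `E` of `K_X`, making it a pre-Co-Segal
category (an `S`-diagram). -/
structure LaxExt {X : Type w} (E : KObj M X) where
  lax : ∀ {A B C : X} (s : Chain X A B) (t : Chain X B C),
    E.F s ⊗ E.F t ⟶ E.F (s.comp t)
  lax_natural : ∀ {A B C : X} {s s' : Chain X A B} {t t' : Chain X B C}
    (u : ChainHom s s') (w : ChainHom t t'),
    (E.map u ⊗ₘ E.map w) ≫ lax s t = lax s' t' ≫ E.map (u.hcomp w)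
  lax_assoc : ∀ {A B C D : X} (s : Chain X A B) (t : Chain X B C) (r : Chain X C D),
    (lax s t ▷ E.F r) ≫ lax (s.comp t) r =
      (α_ (E.F s) (E.F t) (E.F r)).hom ≫ (E.F s ◁ lax t r) ≫ lax s (t.comp r) ≫
        eqToHom (by rw [Chain.comp_assoc])

/-- The pre-Co-Segal category obtained from an object of `K_X` equipped with a laxity
structure. -/
def LaxExt.toSObj {X : Type w} {E : KObj M X} (str : LaxExt M E) : SObj M X :=
  { E with lax := str.lax, lax_natural := str.lax_natural, lax_assoc := str.lax_assoc }

/-- `L` is compatible with the laxity maps of `G` and of the structure `str` on `E`,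
i.e. it is (the underlying map of) a morphism of `S`-diagrams `G ⟶ (E, str)`. -/
def IsLaxCompat {X : Type w} {G : SObj M X} {E : KObj M X} (str : LaxExt M E)
    (L : (forgetLax M X).obj G ⟶ E) : Prop :=
  ∀ {A B C : X} (s : Chain X A B) (t : Chain X B C),
    (L.app s ⊗ₘ L.app t) ≫ str.lax s t = G.lax s t ≫ L.app (s.comp t)


/-!
Levelwise, `L` is the coequalizer of the reflexive pair `σ₁, σ₂` (with common section `p`).
Since `⊗` preserves coequalizers in each variable and the pairs are reflexive, `L s ⊗ L t` is
the coequalizer of `σ₁ s ⊗ σ₁ t, σ₂ s ⊗ σ₂ t`. The map `G.lax s t ≫ L (s ⊗ t)` coequalizes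
this pair because `σ₁, σ₂` are lax morphisms, so it descends to a laxity map
`E s ⊗ E t ⟶ E (s ⊗ t)`. Its naturality and associativity, the uniqueness of this structure
and the universal property in `M_S(X)` are then identities that can be checked after
precomposing with the epimorphisms `L s ⊗ L t` and `(L s ⊗ L t) ⊗ L r`.
-/

section ReflexiveCoequalizer

variable {C : Type*} [Category C] [MonoidalCategory C]

theorem tensorHom_cofork_condition {A₁ B₁ Q₁ A₂ B₂ Q₂ : C} {f₁ g₁ : A₁ ⟶ B₁} {q₁ : B₁ ⟶ Q₁}
    {f₂ g₂ : A₂ ⟶ B₂} {q₂ : B₂ ⟶ Q₂} (w₁ : f₁ ≫ q₁ = g₁ ≫ q₁) (w₂ : f₂ ≫ q₂ = g₂ ≫ q₂) :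
    (f₁ ⊗ₘ f₂) ≫ (q₁ ⊗ₘ q₂) = (g₁ ⊗ₘ g₂) ≫ (q₁ ⊗ₘ q₂) := by
  rw [tensorHom_comp_tensorHom, tensorHom_comp_tensorHom, w₁, w₂]

instance isReflexivePair_tensorHom {A₁ B₁ A₂ B₂ : C} {f₁ g₁ : A₁ ⟶ B₁} {f₂ g₂ : A₂ ⟶ B₂}
    [IsReflexivePair f₁ g₁] [IsReflexivePair f₂ g₂] :
    IsReflexivePair (f₁ ⊗ₘ f₂) (g₁ ⊗ₘ g₂) :=
  .mk' (commonSection f₁ g₁ ⊗ₘ commonSection f₂ g₂)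
    (by rw [tensorHom_comp_tensorHom, section_comp_left, section_comp_left, id_tensorHom_id])
    (by rw [tensorHom_comp_tensorHom, section_comp_right, section_comp_right, id_tensorHom_id])

variable [∀ Z : C, PreservesColimitsOfShape WalkingParallelPair (tensorLeft Z)]
  [∀ Z : C, PreservesColimitsOfShape WalkingParallelPair (tensorRight Z)]

/-- A cofork on `f₁ ⊗ f₂, g₁ ⊗ g₂` first descends along `q₁ ▷ B₂` and then along `Q₁ ◁ q₂`;
the common sections of the two reflexive pairs reduce each descent condition to the
condition on the diagonal. -/
noncomputable def isColimitCoforkTensorHom {A₁ B₁ Q₁ A₂ B₂ Q₂ : C}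
    {f₁ g₁ : A₁ ⟶ B₁} [IsReflexivePair f₁ g₁] {q₁ : B₁ ⟶ Q₁} {w₁ : f₁ ≫ q₁ = g₁ ≫ q₁}
    (h₁ : IsColimit (Cofork.ofπ q₁ w₁))
    {f₂ g₂ : A₂ ⟶ B₂} [IsReflexivePair f₂ g₂] {q₂ : B₂ ⟶ Q₂} {w₂ : f₂ ≫ q₂ = g₂ ≫ q₂}
    (h₂ : IsColimit (Cofork.ofπ q₂ w₂)) :
    IsColimit (Cofork.ofπ (q₁ ⊗ₘ q₂) (tensorHom_cofork_condition w₁ w₂)) := by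
  have hRight (Z : C) := isColimitCoforkMapOfIsColimit (tensorRight Z) w₁ h₁
  have hLeft := isColimitCoforkMapOfIsColimit (tensorLeft Q₁) w₂ h₂
  dsimp only [Functor.flip_obj_map, curriedTensor_map_app, curriedTensor_obj_map] at hRight hLeft
  have section_whiskerRight {f : A₁ ⟶ B₁} (hf : commonSection f₁ g₁ ≫ f = 𝟙 B₁) (f' : A₂ ⟶ B₂) :
      (commonSection f₁ g₁ ▷ A₂) ≫ (f ⊗ₘ f') = B₁ ◁ f' := by
    rw [← tensorHom_id, tensorHom_comp_tensorHom, hf, Category.id_comp, id_tensorHom]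
  have whiskerLeft_section (f : A₁ ⟶ B₁) {f' : A₂ ⟶ B₂}
      (hf' : commonSection f₂ g₂ ≫ f' = 𝟙 B₂) :
      (A₁ ◁ commonSection f₂ g₂) ≫ (f ⊗ₘ f') = f ▷ B₂ := by
    rw [← id_tensorHom, tensorHom_comp_tensorHom, hf', Category.id_comp, tensorHom_id]
  refine Cofork.IsColimit.mk' _ fun s => ?_
  have hs : (f₁ ⊗ₘ f₂) ≫ s.π = (g₁ ⊗ₘ g₂) ≫ s.π := s.condition
  have cond₁ : (f₁ ▷ B₂) ≫ s.π = (g₁ ▷ B₂) ≫ s.π := by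
    rw [← whiskerLeft_section f₁ (section_comp_left f₂ g₂),
      ← whiskerLeft_section g₁ (section_comp_right f₂ g₂), Category.assoc, Category.assoc, hs]
  obtain ⟨k₁, hk₁⟩ : {k₁ // (q₁ ▷ B₂) ≫ k₁ = s.π} := Cofork.IsColimit.desc' (hRight B₂) s.π cond₁
  have exchange (f : A₂ ⟶ B₂) : (q₁ ▷ A₂) ≫ (Q₁ ◁ f) ≫ k₁ = (B₁ ◁ f) ≫ s.π := by
    rw [← Category.assoc, ← whisker_exchange, Category.assoc, hk₁]
  have cond₂ : (Q₁ ◁ f₂) ≫ k₁ = (Q₁ ◁ g₂) ≫ k₁ := by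
    refine Cofork.IsColimit.hom_ext (hRight A₂) ?_
    simp only [Cofork.π_ofπ]
    rw [exchange, exchange, ← section_whiskerRight (section_comp_left f₁ g₁),
      ← section_whiskerRight (section_comp_right f₁ g₁), Category.assoc, Category.assoc, hs]
  obtain ⟨k₂, hk₂⟩ : {k₂ // (Q₁ ◁ q₂) ≫ k₂ = k₁} := Cofork.IsColimit.desc' hLeft k₁ cond₂
  refine ⟨k₂, ?_, fun {m} hm => ?_⟩
  · change (q₁ ⊗ₘ q₂) ≫ _ = s.π
    rw [MonoidalCategory.tensorHom_def q₁ q₂, Category.assoc, hk₂, hk₁]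
  · change (q₁ ⊗ₘ q₂) ≫ m = s.π at hm
    refine Cofork.IsColimit.hom_ext hLeft (Cofork.IsColimit.hom_ext (hRight B₂) ?_)
    simp only [Cofork.π_ofπ]
    rw [hk₂, hk₁, ← Category.assoc, ← MonoidalCategory.tensorHom_def q₁ q₂, hm]

theorem epi_tensorHom_of_isColimit {A₁ B₁ Q₁ A₂ B₂ Q₂ : C}
    {f₁ g₁ : A₁ ⟶ B₁} [IsReflexivePair f₁ g₁] {q₁ : B₁ ⟶ Q₁} {w₁ : f₁ ≫ q₁ = g₁ ≫ q₁}
    (h₁ : IsColimit (Cofork.ofπ q₁ w₁))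
    {f₂ g₂ : A₂ ⟶ B₂} [IsReflexivePair f₂ g₂] {q₂ : B₂ ⟶ Q₂} {w₂ : f₂ ≫ q₂ = g₂ ≫ q₂}
    (h₂ : IsColimit (Cofork.ofπ q₂ w₂)) : Epi (q₁ ⊗ₘ q₂) :=
  Cofork.IsColimit.epi (isColimitCoforkTensorHom h₁ h₂)

end ReflexiveCoequalizer

theorem KHom.congr_app {M : Type u} [Category.{v} M] {X : Type w} {P Q : KObj M X}
    {a b : P ⟶ Q} (h : a = b) {A B : X} (t : Chain X A B) : a.app t = b.app t := by
  rw [h]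

namespace KObj

variable {M : Type u} [Category.{v} M] {X : Type w}

def eval {A B : X} (r : Chain X A B) : KObj M X ⥤ M where
  obj P := P.F r
  map f := f.app r

section LevelwiseCoequalizer

variable [HasCoequalizers M] {P Q : KObj M X} (f g : P ⟶ Q)

noncomputable def levelwiseCoequalizer : KObj M X where
  F t := coequalizer (f.app t) (g.app t)
  map u := coequalizer.desc (Q.map u ≫ coequalizer.π _ _) (by
    rw [← Category.assoc, ← f.naturality, Category.assoc, coequalizer.condition,
      ← Category.assoc, g.naturality, Category.assoc])
  map_id t := coequalizer.hom_ext (by simp [Q.map_id])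
  map_comp u w := coequalizer.hom_ext (by simp [Q.map_comp])

noncomputable def levelwiseCoequalizerπ : Q ⟶ levelwiseCoequalizer f g where
  app t := coequalizer.π (f.app t) (g.app t)
  naturality _ := (coequalizer.π_desc _ _).symm

theorem levelwiseCoequalizer_condition :
    f ≫ levelwiseCoequalizerπ f g = g ≫ levelwiseCoequalizerπ f g :=
  KHom.ext' fun _ => coequalizer.condition _ _

noncomputable def levelwiseCoequalizerDesc {Z : KObj M X} (k : Q ⟶ Z) (hk : f ≫ k = g ≫ k) :
    levelwiseCoequalizer f g ⟶ Z where
  app t := coequalizer.desc (k.app t) (KHom.congr_app hk t)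
  naturality u := coequalizer.hom_ext (by
    simp only [levelwiseCoequalizer, coequalizer.π_desc_assoc, Category.assoc, coequalizer.π_desc]
    exact k.naturality u)

noncomputable def isColimitLevelwiseCoequalizer :
    IsColimit (Cofork.ofπ _ (levelwiseCoequalizer_condition f g)) :=
  Cofork.IsColimit.mk _ (fun s => levelwiseCoequalizerDesc f g s.π s.condition)
    (fun _ => KHom.ext' fun _ => coequalizer.π_desc _ _)
    (fun _ _ hm => KHom.ext' fun t => coequalizer.hom_ext
      ((KHom.congr_app hm t).trans (coequalizer.π_desc _ _).symm))

instance preservesColimit_eval {A B : X} (r : Chain X A B) :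
    PreservesColimit (parallelPair f g) (eval r) :=
  preservesColimit_of_preserves_colimit_cocone (isColimitLevelwiseCoequalizer f g)
    ((isColimitMapCoconeCoforkEquiv _ _).symm (coequalizerIsCoequalizer (f.app r) (g.app r)))

end LevelwiseCoequalizer

end KObj

section LaxCompat

variable {M : Type u} [Category.{v} M] [MonoidalCategory M] {X : Type w}

theorem LaxExt.ext_of_isLaxCompat {G : SObj M X} {E : KObj M X}
    {L : (forgetLax M X).obj G ⟶ E}
    (hepi : ∀ {A B C : X} (s : Chain X A B) (t : Chain X B C), Epi (L.app s ⊗ₘ L.app t))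
    {a b : LaxExt M E} (ha : IsLaxCompat a L) (hb : IsLaxCompat b L) : a = b := by
  obtain ⟨a, _, _⟩ := a
  obtain ⟨b, _, _⟩ := b
  obtain rfl : @a = @b := by
    funext A B C s t
    exact (cancel_epi (L.app s ⊗ₘ L.app t)).1 ((ha s t).trans (hb s t).symm)
  rfl

noncomputable def SObj.isColimitCoforkOfForgetLax {P Q R : SObj M X} {f g : P ⟶ Q}
    {π : Q ⟶ R} (w : f ≫ π = g ≫ π)
    (hπ : IsColimit (Cofork.ofπ (f := (forgetLax M X).map f) (g := (forgetLax M X).map g)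
      ((forgetLax M X).map π) (by rw [← Functor.map_comp, ← Functor.map_comp, w])))
    (hepi : ∀ {A B C : X} (s : Chain X A B) (t : Chain X B C), Epi (π.app s ⊗ₘ π.app t)) :
    IsColimit (Cofork.ofπ π w) := by
  refine Cofork.IsColimit.mk' _ fun c => ?_
  have hc : (forgetLax M X).map f ≫ (forgetLax M X).map c.π =
      (forgetLax M X).map g ≫ (forgetLax M X).map c.π := by
    rw [← Functor.map_comp, ← Functor.map_comp, c.condition]
  obtain ⟨d, hd⟩ : {d : R.toKObj ⟶ c.pt.toKObj //
      (forgetLax M X).map π ≫ d = (forgetLax M X).map c.π} :=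
    Cofork.IsColimit.desc' hπ _ hc
  have hπd {A B : X} (r : Chain X A B) : π.app r ≫ d.app r = c.π.app r :=
    KHom.congr_app hd r
  have monoidal {A B C : X} (s : Chain X A B) (t : Chain X B C) :
      (d.app s ⊗ₘ d.app t) ≫ c.pt.lax s t = R.lax s t ≫ d.app (s.comp t) := by
    rw [← cancel_epi (π.app s ⊗ₘ π.app t), ← Category.assoc, tensorHom_comp_tensorHom, hπd, hπd,
      c.π.monoidal, reassoc_of% (π.monoidal s t), hπd]
  refine ⟨⟨d.app, d.naturality, monoidal⟩, SHom.ext' hπd, fun {m} hm => SHom.ext' fun r => ?_⟩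
  have hm' : (forgetLax M X).map π ≫ (forgetLax M X).map m = (forgetLax M X).map c.π := by
    rw [← Functor.map_comp]; exact congrArg _ hm
  exact KHom.congr_app (Cofork.IsColimit.hom_ext hπ (hm'.trans hd.symm)) r

end LaxCompat

section Descent

variable {M : Type u} [Category.{v} M] [MonoidalCategory M]
  [∀ Z : M, PreservesColimitsOfShape WalkingParallelPair (tensorLeft Z)]
  [∀ Z : M, PreservesColimitsOfShape WalkingParallelPair (tensorRight Z)]
  {X : Type w} {F G : SObj M X} {σ₁ σ₂ : F ⟶ G} {E : KObj M X}
  {L : G.toKObj ⟶ E} [∀ (A B : X) (r : Chain X A B), IsReflexivePair (σ₁.app r) (σ₂.app r)]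
  (hw : ∀ {A B : X} (r : Chain X A B), σ₁.app r ≫ L.app r = σ₂.app r ≫ L.app r)
  (hL : ∀ {A B : X} (r : Chain X A B), IsColimit (Cofork.ofπ (L.app r) (hw r)))

noncomputable def descLax {A B C : X} (s : Chain X A B) (t : Chain X B C) :
    E.F s ⊗ E.F t ⟶ E.F (s.comp t) :=
  Cofork.IsColimit.desc (isColimitCoforkTensorHom (hL s) (hL t)) (G.lax s t ≫ L.app (s.comp t))
    (by rw [← Category.assoc, ← Category.assoc, σ₁.monoidal, σ₂.monoidal, Category.assoc,
      Category.assoc, hw])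

theorem tensorHom_app_comp_descLax {A B C : X} (s : Chain X A B) (t : Chain X B C) :
    (L.app s ⊗ₘ L.app t) ≫ descLax hw hL s t = G.lax s t ≫ L.app (s.comp t) :=
  Cofork.IsColimit.π_desc' (isColimitCoforkTensorHom (hL s) (hL t)) _ _

theorem descLax_natural {A B C : X} {s s' : Chain X A B} {t t' : Chain X B C}
    (u : ChainHom s s') (v : ChainHom t t') :
    (E.map u ⊗ₘ E.map v) ≫ descLax hw hL s t = descLax hw hL s' t' ≫ E.map (u.hcomp v) := by
  have := epi_tensorHom_of_isColimit (hL s') (hL t')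
  rw [← cancel_epi (L.app s' ⊗ₘ L.app t'), ← Category.assoc, tensorHom_comp_tensorHom,
    ← L.naturality, ← L.naturality, ← tensorHom_comp_tensorHom, Category.assoc,
    tensorHom_app_comp_descLax, ← Category.assoc, G.lax_natural, Category.assoc, L.naturality,
    ← Category.assoc (L.app s' ⊗ₘ L.app t'), tensorHom_app_comp_descLax, Category.assoc]

theorem descLax_assoc {A B C D : X} (s : Chain X A B) (t : Chain X B C) (r : Chain X C D) :
    (descLax hw hL s t ▷ E.F r) ≫ descLax hw hL (s.comp t) r =
      (α_ (E.F s) (E.F t) (E.F r)).hom ≫ (E.F s ◁ descLax hw hL t r) ≫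
        descLax hw hL s (t.comp r) ≫ eqToHom (by rw [Chain.comp_assoc]) := by
  have := epi_tensorHom_of_isColimit (isColimitCoforkTensorHom (hL s) (hL t)) (hL r)
  have lax_st : ((L.app s ⊗ₘ L.app t) ⊗ₘ L.app r) ≫ (descLax hw hL s t ▷ E.F r) =
      (G.lax s t ▷ G.F r) ≫ (L.app (s.comp t) ⊗ₘ L.app r) := by
    rw [← tensorHom_id, ← tensorHom_id, tensorHom_comp_tensorHom, tensorHom_comp_tensorHom,
      Category.comp_id, Category.id_comp, tensorHom_app_comp_descLax]
  have lax_tr : (L.app s ⊗ₘ (L.app t ⊗ₘ L.app r)) ≫ (E.F s ◁ descLax hw hL t r) =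
      (G.F s ◁ G.lax t r) ≫ (L.app s ⊗ₘ L.app (t.comp r)) := by
    rw [← id_tensorHom, ← id_tensorHom, tensorHom_comp_tensorHom, tensorHom_comp_tensorHom,
      Category.comp_id, Category.id_comp, tensorHom_app_comp_descLax]
  rw [← cancel_epi ((L.app s ⊗ₘ L.app t) ⊗ₘ L.app r), reassoc_of% lax_st,
    tensorHom_app_comp_descLax, reassoc_of% (G.lax_assoc s t r), associator_naturality_assoc,
    reassoc_of% lax_tr, reassoc_of% (tensorHom_app_comp_descLax hw hL s (t.comp r)),
    eqToHom_naturality (fun r => L.app r) (Chain.comp_assoc s t r).symm]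

noncomputable def descLaxExt : LaxExt M E where
  lax := descLax hw hL
  lax_natural := descLax_natural hw hL
  lax_assoc := descLax_assoc hw hL

theorem isLaxCompat_descLaxExt : IsLaxCompat (descLaxExt hw hL) L :=
  tensorHom_app_comp_descLax hw hL

end Descent

/-- **Coequalizers of `U`-split pairs of pre-Co-Segal categories.**  Let `M` be a
cocomplete symmetric monoidal closed category, `σ₁, σ₂ : F ⇉ G` a parallel pair of
morphisms of `S`-diagrams in `M_S(X)`, and `L : U(G) ⟶ E` their coequalizer computed
levelwise in `K_X`.  If there is a splitting `p : U(G) ⟶ U(F)` with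
`p ≫ U(σ₁) = p ≫ U(σ₂) = id`, then `E` carries a *unique* structure of `S`-diagram making
`L` a morphism of `S`-diagrams, and `L : G ⟶ E` is then the coequalizer of `(σ₁, σ₂)` in
`M_S(X)` (which is preserved by `U`). -/
theorem coequalizer_of_split_pair
    {M : Type u} [Category.{v} M] [MonoidalCategory M] [SymmetricCategory M]
    [MonoidalClosed M] [HasColimits M] {X : Type w}
    {F G : SObj M X} (σ₁ σ₂ : F ⟶ G) {E : KObj M X}
    (L : (forgetLax M X).obj G ⟶ E)
    (hw : (forgetLax M X).map σ₁ ≫ L = (forgetLax M X).map σ₂ ≫ L)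
    (hL : Nonempty (IsColimit (Cofork.ofπ L hw)))
    (p : (forgetLax M X).obj G ⟶ (forgetLax M X).obj F)
    (hp₁ : p ≫ (forgetLax M X).map σ₁ = 𝟙 _)
    (hp₂ : p ≫ (forgetLax M X).map σ₂ = 𝟙 _) :
    (∃! str : LaxExt M E, IsLaxCompat str L) ∧
      ∀ (str : LaxExt M E) (hc : IsLaxCompat str L),
        ∃ w : σ₁ ≫ (show G ⟶ str.toSObj from ⟨L.app, L.naturality, hc⟩) =
            σ₂ ≫ (show G ⟶ str.toSObj from ⟨L.app, L.naturality, hc⟩),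
          Nonempty (IsColimit
            (Cofork.ofπ (show G ⟶ str.toSObj from ⟨L.app, L.naturality, hc⟩) w)) := by
  obtain ⟨hL⟩ := hL
  change G.toKObj ⟶ E at L
  have hw' {A B : X} (r : Chain X A B) : σ₁.app r ≫ L.app r = σ₂.app r ≫ L.app r :=
    KHom.congr_app hw r
  have hLr {A B : X} (r : Chain X A B) : IsColimit (Cofork.ofπ (L.app r) (hw' r)) :=
    isColimitCoforkMapOfIsColimit (KObj.eval r) hw hL
  have : ∀ (A B : X) (r : Chain X A B), IsReflexivePair (σ₁.app r) (σ₂.app r) := fun _ _ r =>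
    .mk' (p.app r) (KHom.congr_app hp₁ r) (KHom.congr_app hp₂ r)
  have hepi {A B C : X} (s : Chain X A B) (t : Chain X B C) : Epi (L.app s ⊗ₘ L.app t) :=
    epi_tensorHom_of_isColimit (hLr s) (hLr t)
  refine ⟨⟨descLaxExt hw' hLr, isLaxCompat_descLaxExt hw' hLr,
    fun str hc => LaxExt.ext_of_isLaxCompat hepi hc (isLaxCompat_descLaxExt hw' hLr)⟩,
    fun str hc => ⟨SHom.ext' hw', ⟨SObj.isColimitCoforkOfForgetLax _ hL hepi⟩⟩⟩
end

section
/- Let M be a model category, h : U → V a cofibration, and choose a relative cylinder for h: a factorization of the codiagonal V ∪_U V → V as a cofibration a : V ∪_U V → Z followed by a trivial fibration q : Z → V, with inclusions i₀, i₁ : V → V ∪_U V. Let ζ(h) : h → (a∘i₁) be the morphism of Arr(M) given by the square with top h, left h, bottom a∘i₀, right a∘i₁. Then: (1) ζ(h) is a projective (Reedy) cofibration in Arr(M); (2) the map a∘i₀ : V → Z is a trivial cofibration; (3) for a morphism g : A → B of M, g is injective with respect to ζ(h) if and only if g has the right homotopy lifting property with respect to h (a lift r : V → A of the top map together with a homotopy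 relative to U between g∘r and the bottom map). -/
/-!
By the retract argument the cofibrations are exactly the maps with the left lifting property
against trivial fibrations, so they are closed under composition and cobase change. Hence
`a ∘ i₀` is a cofibration, being the cobase change `i₀` of `h` followed by `a`; it is a weak
equivalence because it is a section of the weak equivalence `q`. The induced map from the pushout
in (1) is `a` itself, and (3) only unfolds what a morphism out of `ζ(h)` is.
-/

universe v u

open CategoryTheory Limits

/-- The two-out-of-three property for a class of morphisms. -/
def TwoOutOfThree {M : Type u} [Category.{v} M] (W : MorphismProperty M) : Prop :=
  ∀ {X Y Z : M} (f : X ⟶ Y) (g : Y ⟶ Z),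
    (W f → W g → W (f ≫ g)) ∧ (W g → W (f ≫ g) → W f) ∧ (W f → W (f ≫ g) → W g)

/-- Stability of a class of morphisms under retracts. -/
def StableUnderRetracts {M : Type u} [Category.{v} M] (P : MorphismProperty M) : Prop :=
  ∀ ⦃A B A' B' : M⦄ (f : A ⟶ B) (g : A' ⟶ B') (i₁ : A ⟶ A') (r₁ : A' ⟶ A)
    (i₂ : B ⟶ B') (r₂ : B' ⟶ B),
    i₁ ≫ r₁ = 𝟙 A → i₂ ≫ r₂ = 𝟙 B → i₁ ≫ g = f ≫ i₂ → g ≫ r₂ = r₁ ≫ f →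
    P g → P f

/-- A (Quillen closed) model structure on a category `M`: three classes of maps
(weak equivalences, cofibrations, fibrations) satisfying two-out-of-three,
stability under retracts, the lifting axioms and the factorization axioms. -/
structure ModelStr (M : Type u) [Category.{v} M] where
  W : MorphismProperty M
  Cof : MorphismProperty M
  Fib : MorphismProperty M
  two_of_three : TwoOutOfThree W
  w_retract : StableUnderRetracts W
  cof_retract : StableUnderRetracts Cof
  fib_retract : StableUnderRetracts Fib
  lift_trivCof_fib : ∀ ⦃A B P Q : M⦄ (i : A ⟶ B) (p : P ⟶ Q),
    Cof i → W i → Fib p → HasLiftingProperty i p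
  lift_cof_trivFib : ∀ ⦃A B P Q : M⦄ (i : A ⟶ B) (p : P ⟶ Q),
    Cof i → Fib p → W p → HasLiftingProperty i p
  factor_cof_trivFib : ∀ {P Q : M} (f : P ⟶ Q), ∃ (Z : M) (i : P ⟶ Z) (q : Z ⟶ Q),
    Cof i ∧ Fib q ∧ W q ∧ i ≫ q = f
  factor_trivCof_fib : ∀ {P Q : M} (f : P ⟶ Q), ∃ (Z : M) (i : P ⟶ Z) (q : Z ⟶ Q),
    Cof i ∧ W i ∧ Fib q ∧ i ≫ q = f

variable {M : Type u} [Category.{v} M] [HasPushouts M]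

/-- The morphism `ζ(h) : h ⟶ a ∘ i₁` in the arrow category, given by the commutative
square with top `h`, left `h`, bottom `a ∘ i₀` and right `a ∘ i₁`, where
`i₀, i₁ : V ⟶ V ∪_U V` are the two inclusions into the cokernel pair of `h` and
`a : V ∪_U V ⟶ Z` is the cofibration part of a chosen relative cylinder for `h`. -/
noncomputable def zetaHom {U V Z : M} (h : U ⟶ V) (a : pushout h h ⟶ Z) :
    Arrow.mk h ⟶ Arrow.mk (pushout.inr h h ≫ a) :=
  Arrow.homMk (u := h) (v := pushout.inl h h ≫ a)
    (by simp only [Arrow.mk_hom]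
        rw [← Category.assoc, ← Category.assoc, pushout.condition])

section

variable {C : Type*} [Category* C]

lemma TwoOutOfThree.of_comp_eq_id {W : MorphismProperty C} (hW : TwoOutOfThree W)
    {X Y : C} {i : X ⟶ Y} {p : Y ⟶ X} (hp : W p) (hip : i ≫ p = 𝟙 X) : W i :=
  have hid : W (𝟙 X) := (hW p (𝟙 X)).2.2 hp (by rwa [Category.comp_id])
  (hW i p).2.1 hp (hip ▸ hid)

lemma Arrow.forall_exists_homMk_comp_eq_iff {X Y X' Y' A B : C} {i : X ⟶ Y} {j : X' ⟶ Y'}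
    (l : X ⟶ X') (m : Y ⟶ Y') (w : l ≫ j = i ≫ m) (g : A ⟶ B) :
    (∀ α : Arrow.mk i ⟶ Arrow.mk g,
        ∃ β : Arrow.mk j ⟶ Arrow.mk g, Arrow.homMk (u := l) (v := m) w ≫ β = α) ↔
      ∀ (u : X ⟶ A) (v : Y ⟶ B), u ≫ g = i ≫ v →
        ∃ r : X' ⟶ A, l ≫ r = u ∧ ∃ s : Y' ⟶ B, m ≫ s = v ∧ j ≫ s = r ≫ g := by
  constructor
  · intro H u v huv
    obtain ⟨β, hβ⟩ := H (Arrow.homMk (u := u) (v := v) huv)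
    exact ⟨β.left, congrArg CommaMorphism.left hβ, β.right, congrArg CommaMorphism.right hβ,
      β.w.symm⟩
  · intro H α
    obtain ⟨r, hr, s, hs, hrs⟩ := H α.left α.right α.w
    exact ⟨Arrow.homMk (u := r) (v := s) hrs.symm, Arrow.hom_ext _ _ hr hs⟩

namespace ModelStr

variable (S : ModelStr C)

instance : S.Cof.IsStableUnderRetracts where
  of_retract {_ _ _ _ f g} h hg :=
    S.cof_retract f g h.i.left h.r.left h.i.right h.r.right
      (Arrow.hom_ext_iff.mp h.retract).1 (Arrow.hom_ext_iff.mp h.retract).2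
      h.i.w h.r.w.symm hg

instance : MorphismProperty.HasFactorization S.Cof (S.Fib ⊓ S.W) where
  nonempty_mapFactorizationData f :=
    let ⟨Z, i, p, hi, hpf, hpw, fac⟩ := S.factor_cof_trivFib f
    ⟨{ Z := Z, i := i, p := p, fac := fac, hi := hi, hp := ⟨hpf, hpw⟩ }⟩

lemma llp_trivFib_eq_cof : (S.Fib ⊓ S.W).llp = S.Cof :=
  MorphismProperty.llp_eq_of_le_llp_of_hasFactorization_of_isStableUnderRetracts
    fun _ _ i hi _ _ p hp ↦ S.lift_cof_trivFib i p hi hp.1 hp.2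

instance : S.Cof.IsMultiplicative := S.llp_trivFib_eq_cof ▸ inferInstance

instance : S.Cof.IsStableUnderCobaseChange := S.llp_trivFib_eq_cof ▸ inferInstance

end ModelStr

end

/-- **Properties of `ζ(h)`.**  Let `M` be a model category, `h : U ⟶ V` a cofibration and
choose a relative cylinder for `h`: a factorization of the codiagonal
`V ∪_U V ⟶ V` as a cofibration `a : V ∪_U V ⟶ Z` followed by a trivial fibration
`q : Z ⟶ V`.  Then:
(1) `ζ(h)` is a projective (Reedy) cofibration in the arrow category, i.e. its top
component `h` is a cofibration and the induced map from the pushout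
`V ∪_U V ⟶ Z` is a cofibration;
(2) the map `a ∘ i₀ : V ⟶ Z` is a trivial cofibration; and
(3) for any morphism `g : A ⟶ B` of `M`, `g` is injective with respect to `ζ(h)` if and
only if `g` has the right homotopy lifting property with respect to `h` (a lift
`r : V ⟶ A` of the top map of any square, together with a homotopy `f' : Z ⟶ B` relative
to `U` between `g ∘ r` and the bottom map). -/
theorem zetaHom_properties (S : ModelStr M)
    {U V Z : M} (h : U ⟶ V) (hc : S.Cof h)
    (a : pushout h h ⟶ Z) (q : Z ⟶ V)
    (ha : S.Cof a) (hq : S.Fib q ∧ S.W q)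
    (hfact : a ≫ q = pushout.desc (𝟙 V) (𝟙 V) rfl) :
    (S.Cof h ∧
      S.Cof (pushout.desc (pushout.inl h h ≫ a) (pushout.inr h h ≫ a)
        (by rw [← Category.assoc, ← Category.assoc, pushout.condition]))) ∧
    (S.Cof (pushout.inl h h ≫ a) ∧ S.W (pushout.inl h h ≫ a)) ∧
    (∀ {A B : M} (g : A ⟶ B),
      (∀ α : Arrow.mk h ⟶ Arrow.mk g,
          ∃ β : Arrow.mk (pushout.inr h h ≫ a) ⟶ Arrow.mk g, zetaHom h a ≫ β = α) ↔
      (∀ (u : U ⟶ A) (v : V ⟶ B), u ≫ g = h ≫ v →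
          ∃ r : V ⟶ A, h ≫ r = u ∧
            ∃ f' : Z ⟶ B, (pushout.inl h h ≫ a) ≫ f' = v ∧
              (pushout.inr h h ≫ a) ≫ f' = r ≫ g)) := by
  have hdesc : pushout.desc (pushout.inl h h ≫ a) (pushout.inr h h ≫ a)
      (by rw [← Category.assoc, ← Category.assoc, pushout.condition]) = a :=
    pushout.hom_ext (pushout.inl_desc _ _ _) (pushout.inr_desc _ _ _)
  have hsection : (pushout.inl h h ≫ a) ≫ q = 𝟙 V := by
    rw [Category.assoc, hfact, pushout.inl_desc]
  have hinl : S.Cof (pushout.inl h h) :=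
    MorphismProperty.of_isPushout (IsPushout.of_hasPushout h h) hc
  exact ⟨⟨hc, hdesc.symm ▸ ha⟩,
    ⟨S.Cof.comp_mem _ _ hinl ha, TwoOutOfThree.of_comp_eq_id S.two_of_three hq.2 hsection⟩,
    fun g ↦ Arrow.forall_exists_homMk_comp_eq_iff _ _ _ g⟩
end

section
/- Let M be a model category and suppose F : M → M is a weak monadic projection onto a full subcategory R stable under weak equivalences, with unit η_A : A → F(A), for a model structure whose cofibrations contain another model structure's cofibrations (injective vs projective setting). Define F̃ by functorially factoring η_A in the projective model structure as A ↪ F̃(A) ↠ F(A) (projective cofibration followed by trivial fibration). Then F̃ with unit the cofibration part is again a weak monadic projection onto R: (1) F̃(A) ∈ R for all A; (2) the unit is a weak equivalence whenever A ∈ R; (3) F̃ of the unit is a weak equivalence; (4) F̃ preserves weak equivalences between projectively cofibrant objects; (5) F̃(A) is cofibrant when A is projectively cofibrant. -/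
universe v u

open CategoryTheory Limits

/-- **Weak monadic projections transfer from the injective to the projective model
structure.**  Let `M` carry two model structures `Sinj` and `Sproj` (injective and
projective) with the same weak equivalences and with every projective cofibration an
injective cofibration.  Let `R` be a class of objects stable under weak equivalences and
let `(F, η)` be a weak monadic projection from the injective structure onto `R`.  Define
`F'` by functorially factoring `η` in the projective structure as a projective cofibration
`η' : A ⟶ F' A` followed by a trivial fibration `p : F' A ⟶ F A`.  Then `(F', η')` is a
weak monadic projection from the projective structure onto `R`: (1) `F' A ∈ R` for all
`A`; (2) `η'` is a weak equivalence on objects of `R`; (3) `F'(η')` is a weak equivalence;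
(4) `F'` preserves weak equivalences between projectively cofibrant objects; and (5) `F'`
preserves projective cofibrancy. -/
theorem weak_monadic_projection_transfer {M : Type u} [Category.{v} M] [HasInitial M]
    (Sinj Sproj : ModelStr M)
    (hW : Sinj.W = Sproj.W)
    (hCof : ∀ {A B : M} (f : A ⟶ B), Sproj.Cof f → Sinj.Cof f)
    (R : M → Prop)
    (hR : ∀ {A B : M} (f : A ⟶ B), Sinj.W f → (R A ↔ R B))
    (F : M ⥤ M) (η : 𝟭 M ⟶ F)
    (wmp₁ : ∀ A : M, R (F.obj A))
    (wmp₂ : ∀ A : M, R A → Sinj.W (η.app A))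
    (wmp₃ : ∀ A : M, Sinj.W (F.map (η.app A)))
    (wmp₄ : ∀ {A B : M} (f : A ⟶ B), Sinj.Cof (initial.to A) → Sinj.Cof (initial.to B) →
      Sinj.W f → Sinj.W (F.map f))
    (wmp₅ : ∀ A : M, Sinj.Cof (initial.to A) → Sinj.Cof (initial.to (F.obj A)))
    (F' : M ⥤ M) (η' : 𝟭 M ⟶ F') (p : F' ⟶ F)
    (hfac : ∀ A : M, η'.app A ≫ p.app A = η.app A)
    (hη' : ∀ A : M, Sproj.Cof (η'.app A))
    (hp : ∀ A : M, Sproj.Fib (p.app A) ∧ Sproj.W (p.app A)) :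
    (∀ A : M, R (F'.obj A)) ∧
      (∀ A : M, R A → Sproj.W (η'.app A)) ∧
      (∀ A : M, Sproj.W (F'.map (η'.app A))) ∧
      (∀ {A B : M} (f : A ⟶ B), Sproj.Cof (initial.to A) → Sproj.Cof (initial.to B) →
        Sproj.W f → Sproj.W (F'.map f)) ∧
      (∀ A : M, Sproj.Cof (initial.to A) → Sproj.Cof (initial.to (F'.obj A))) := by
  have hWiff : ∀ {X Y : M} (f : X ⟶ Y), Sproj.W f ↔ Sinj.W f := fun {X Y} f => by rw [hW]
  -- F preserves weak equivalences between objects of R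
  have lemA : ∀ {X Y : M} (f : X ⟶ Y), R X → R Y → Sinj.W f → Sinj.W (F.map f) := by
    intro X Y f hX hY hf
    have hnat : η.app X ≫ F.map f = f ≫ η.app Y := by
      have := η.naturality f
      simpa using this.symm
    have h1 : Sinj.W (f ≫ η.app Y) :=
      (Sinj.two_of_three f (η.app Y)).1 hf (wmp₂ Y hY)
    rw [← hnat] at h1
    exact (Sinj.two_of_three (η.app X) (F.map f)).2.2 (wmp₂ X hX) h1
  -- transfer along p : F' ⟶ F
  have lemB : ∀ {X Y : M} (f : X ⟶ Y), Sinj.W (F.map f) → Sinj.W (F'.map f) := by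
    intro X Y f hf
    have pX : Sinj.W (p.app X) := (hWiff _).mp (hp X).2
    have pY : Sinj.W (p.app Y) := (hWiff _).mp (hp Y).2
    have h1 : Sinj.W (p.app X ≫ F.map f) :=
      (Sinj.two_of_three (p.app X) (F.map f)).1 pX hf
    rw [← p.naturality f] at h1
    exact (Sinj.two_of_three (F'.map f) (p.app Y)).2.1 pY h1
  have part1 : ∀ A : M, R (F'.obj A) := by
    intro A
    exact (hR (p.app A) ((hWiff _).mp (hp A).2)).mpr (wmp₁ A)
  have part2 : ∀ A : M, R A → Sproj.W (η'.app A) := by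
    intro A hA
    have hη : Sinj.W (η'.app A ≫ p.app A) := by rw [hfac A]; exact wmp₂ A hA
    exact (hWiff _).mpr
      ((Sinj.two_of_three (η'.app A) (p.app A)).2.1 ((hWiff _).mp (hp A).2) hη)
  have part3 : ∀ A : M, Sproj.W (F'.map (η'.app A)) := by
    intro A
    have hFp : Sinj.W (F.map (p.app A)) :=
      lemA (p.app A) (part1 A) (wmp₁ A) ((hWiff _).mp (hp A).2)
    have hFη : Sinj.W (F.map (η'.app A) ≫ F.map (p.app A)) := by
      rw [← F.map_comp, hfac A]; exact wmp₃ A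
    have hFη' : Sinj.W (F.map (η'.app A)) :=
      (Sinj.two_of_three (F.map (η'.app A)) (F.map (p.app A))).2.1 hFp hFη
    exact (hWiff _).mpr (lemB _ hFη')
  have part4 : ∀ {A B : M} (f : A ⟶ B), Sproj.Cof (initial.to A) →
      Sproj.Cof (initial.to B) → Sproj.W f → Sproj.W (F'.map f) := by
    intro A B f hA hB hf
    exact (hWiff _).mpr (lemB f (wmp₄ f (hCof _ hA) (hCof _ hB) ((hWiff f).mp hf)))
  have cofComp : ∀ {X Y Z : M} (f : X ⟶ Y) (g : Y ⟶ Z),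
      Sproj.Cof f → Sproj.Cof g → Sproj.Cof (f ≫ g) := by
    intro X Y Z f g hf hg
    obtain ⟨T, i, q, hi, hq, hwq, hfac'⟩ := Sproj.factor_cof_trivFib (f ≫ g)
    have h1 : HasLiftingProperty f q := Sproj.lift_cof_trivFib f q hf hq hwq
    have h2 : HasLiftingProperty g q := Sproj.lift_cof_trivFib g q hg hq hwq
    have h3 : HasLiftingProperty (f ≫ g) q := HasLiftingProperty.of_comp_left f g q
    have sq : CommSq i (f ≫ g) q (𝟙 Z) := ⟨by simp [hfac']⟩
    obtain ⟨⟨⟨l, hl1, hl2⟩⟩⟩ := h3.sq_hasLift sq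
    exact Sproj.cof_retract (f ≫ g) i (𝟙 X) (𝟙 X) l q (by simp) hl2
      (by simpa using hl1.symm) (by simpa using hfac') hi
  refine ⟨part1, part2, part3, @part4, ?_⟩
  intro A hA
  have : initial.to (F'.obj A) = initial.to A ≫ η'.app A := by simp
  rw [this]
  exact cofComp _ _ hA (hη' A)
end
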